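/- Let α₁, α₂, α₃, h ∈ ℂ and set aᵢ = αᵢ². Then there exists a nonzero constant c ∈ ℂ such that for all x ∈ ℂ⁴ and each index i, the i-th component of Φ_{−h}(Φ_h(x)) equals c · K(x)² · xᵢ, where K(x) = κ₁(x)κ₂(x)κ₃(x)κ₄(x). In other words, the composition of the KHK Euler map with its inverse map Φ_{−h} is the identity multiplied by the common polynomial factor κ = (κ₁κ₂κ₃κ₄)² of degree eight. -/

import Mathlib

noncomputable section

/-- The KHK discretisation of the Euler top, in homogeneous coordinates. -/
def PhiH (a₁ a₂ a₃ h : ℂ) (x : Fin 4 → ℂ) : Fin 4 → ℂ :=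
  ![-(h ^ 2) * x 0 * (a₁ * a₂ * (x 2) ^ 2 + a₁ * a₃ * (x 1) ^ 2 - a₂ * a₃ * (x 0) ^ 2)
      - 4 * a₁ * h * x 1 * x 2 * x 3 - 4 * x 0 * (x 3) ^ 2,
    -(h ^ 2) * x 1 * (a₁ * a₂ * (x 2) ^ 2 - a₁ * a₃ * (x 1) ^ 2 + a₂ * a₃ * (x 0) ^ 2)
      - 4 * a₂ * h * x 0 * x 2 * x 3 - 4 * x 1 * (x 3) ^ 2,
    h ^ 2 * x 2 * (a₁ * a₂ * (x 2) ^ 2 - a₁ * a₃ * (x 1) ^ 2 - a₂ * a₃ * (x 0) ^ 2)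
      - 4 * a₃ * h * x 0 * x 1 * x 3 - 4 * x 2 * (x 3) ^ 2,
    a₁ * a₂ * a₃ * h ^ 3 * x 0 * x 1 * x 2
      + h ^ 2 * x 3 * (a₁ * a₂ * (x 2) ^ 2 + a₁ * a₃ * (x 1) ^ 2 + a₂ * a₃ * (x 0) ^ 2)
      - 4 * (x 3) ^ 3]

/-- The product `K = κ₁κ₂κ₃κ₄` of the four linear forms defining the contracted planes. -/
def Kpoly (α₁ α₂ α₃ h : ℂ) (x : Fin 4 → ℂ) : ℂ :=
  (α₁ * α₂ * h * x 2 - α₁ * α₃ * h * x 1 - α₂ * α₃ * h * x 0 - 2 * x 3) *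
  (α₁ * α₂ * h * x 2 + α₁ * α₃ * h * x 1 - α₂ * α₃ * h * x 0 + 2 * x 3) *
  (α₁ * α₂ * h * x 2 - α₁ * α₃ * h * x 1 + α₂ * α₃ * h * x 0 + 2 * x 3) *
  (α₁ * α₂ * h * x 2 + α₁ * α₃ * h * x 1 + α₂ * α₃ * h * x 0 - 2 * x 3)

theorem PhiH_neg_comp_PhiH (α₁ α₂ α₃ h : ℂ) (x : Fin 4 → ℂ) :
    PhiH (α₁ ^ 2) (α₂ ^ 2) (α₃ ^ 2) (-h) (PhiH (α₁ ^ 2) (α₂ ^ 2) (α₃ ^ 2) h x) =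
      Kpoly α₁ α₂ α₃ h x ^ 2 • x := by
  ext i
  fin_cases i <;>
    simp only [PhiH, Kpoly, Pi.smul_apply, smul_eq_mul, Matrix.cons_val_zero, Matrix.cons_val_one,
      Matrix.cons_val_two, Matrix.cons_val_three, Matrix.head_cons, Matrix.tail_cons, Fin.isValue,
      Fin.zero_eta, Fin.mk_one, Fin.reduceFinMk] <;>
    ring

/-- Composing the KHK Euler map with its inverse map `Φ_{-h}` gives the identity multiplied
by the common degree eight polynomial factor `κ = (κ₁κ₂κ₃κ₄)²`. -/
theorem euler_composition_with_inverse (α₁ α₂ α₃ h : ℂ) :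
    ∃ c : ℂ, c ≠ 0 ∧
      ∀ (x : Fin 4 → ℂ) (i : Fin 4),
        PhiH (α₁ ^ 2) (α₂ ^ 2) (α₃ ^ 2) (-h) (PhiH (α₁ ^ 2) (α₂ ^ 2) (α₃ ^ 2) h x) i =
          c * (Kpoly α₁ α₂ α₃ h x) ^ 2 * x i :=
  ⟨1, one_ne_zero, fun x i => by simp [PhiH_neg_comp_PhiH]⟩
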